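/- arXiv:2412.16675 — 2 statements merged into one kernel-verified Lean document; each statement's English description precedes it below -/
import Mathlib

section
/- Let f be a nonnegative arithmetic function with ∑_{n ≤ t} f(n) ≪ t (log log t)^β for all t ≥ 3, and let r ≥ 2. Then ∑_{d ≤ x} f(d)·(x/d)^{1−1/r}·(log(x/d))^{r−2} ≪ x (log x)^{r−2} (log log x)^β. -/
/-!
Put `w(d) = (x/d)^(1-1/r) (log (x/d))^(r-2)`, which decreases in `d` on `[1, x]`. For `k ≤ x` the
hypothesis at `t = max k 3 ≤ 3k` gives `∑_{n ≤ k} f(n) ≤ A k` with `A = 3 K (log log x)^β`, so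
summation by parts against the decreasing weight bounds the sum by
`A ∑_{d ≤ x} w(d) ≤ A (log x)^(r-2) x^(1-1/r) ∑_{d ≤ x} d^(1/r-1)`.
By concavity of `t ↦ t^(1/r)` the last sum telescopes to at most `r x^(1/r)`.
-/

open Real Finset

lemma one_lt_log_of_three_le {t : ℝ} (ht : 3 ≤ t) : 1 < log t := by
  rw [lt_log_iff_exp_lt (by linarith)]
  exact exp_one_lt_three.trans_le ht

lemma one_le_div_of_mem_Icc_floor {x : ℝ} {d : ℕ} (hd : d ∈ Set.Icc 1 ⌊x⌋₊) : 1 ≤ x / d := by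
  have hd0 : (0 : ℝ) < d := by exact_mod_cast hd.1
  rw [one_le_div hd0]
  exact (Nat.le_floor_iff' (Nat.one_le_iff_ne_zero.1 hd.1)).1 hd.2

-- Bernoulli's inequality `(1 - 1/t)^p ≤ 1 - p/t`, multiplied by `t^p`.
lemma mul_rpow_sub_one_le_rpow_sub_rpow {p t : ℝ} (hp0 : 0 ≤ p) (hp1 : p ≤ 1) (ht : 1 ≤ t) :
    p * t ^ (p - 1) ≤ t ^ p - (t - 1) ^ p := by
  have ht0 : 0 < t := by linarith
  have hinv : t⁻¹ ≤ 1 := inv_le_one_of_one_le₀ ht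
  have hbern : (1 + -t⁻¹) ^ p ≤ 1 + p * -t⁻¹ :=
    rpow_one_add_le_one_add_mul_self (by linarith) hp0 hp1
  have hsplit : t - 1 = t * (1 + -t⁻¹) := by field_simp; ring
  calc p * t ^ (p - 1) = t ^ p - t ^ p * (1 + p * -t⁻¹) := by
        rw [rpow_sub_one ht0.ne']; ring
    _ ≤ t ^ p - t ^ p * (1 + -t⁻¹) ^ p := by gcongr
    _ = t ^ p - (t - 1) ^ p := by rw [hsplit, mul_rpow ht0.le (by linarith)]

lemma mul_sum_Icc_rpow_sub_one_le {p : ℝ} (hp0 : 0 ≤ p) (hp1 : p ≤ 1) (N : ℕ) :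
    p * ∑ d ∈ Icc 1 N, (d : ℝ) ^ (p - 1) ≤ (N : ℝ) ^ p := by
  induction N with
  | zero => simpa using rpow_nonneg le_rfl p
  | succ N ih =>
    have hstep := mul_rpow_sub_one_le_rpow_sub_rpow hp0 hp1 (t := N + 1) (by simp)
    rw [add_sub_cancel_right] at hstep
    rw [sum_Icc_succ_top (by omega), mul_add]
    push_cast
    linarith

lemma sum_Icc_floor_div_rpow_le {p x : ℝ} (hp0 : 0 < p) (hp1 : p ≤ 1) (hx : 0 ≤ x) :
    ∑ d ∈ Icc 1 ⌊x⌋₊, (x / d) ^ (1 - p) ≤ x / p := by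
  have hterm : ∀ d ∈ Icc 1 ⌊x⌋₊, (x / d) ^ (1 - p) = x ^ (1 - p) * (d : ℝ) ^ (p - 1) := by
    intro d _
    rw [div_rpow hx d.cast_nonneg, div_eq_mul_inv, ← rpow_neg d.cast_nonneg, neg_sub]
  rw [sum_congr rfl hterm, ← mul_sum, le_div_iff₀ hp0]
  calc x ^ (1 - p) * (∑ d ∈ Icc 1 ⌊x⌋₊, (d : ℝ) ^ (p - 1)) * p
      = x ^ (1 - p) * (p * ∑ d ∈ Icc 1 ⌊x⌋₊, (d : ℝ) ^ (p - 1)) := by ring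
    _ ≤ x ^ (1 - p) * (⌊x⌋₊ : ℝ) ^ p := by
        gcongr; exact mul_sum_Icc_rpow_sub_one_le hp0.le hp1 _
    _ ≤ x ^ (1 - p) * x ^ p := by gcongr; exact Nat.floor_le hx
    _ = x := by rw [← rpow_add' hx (by simp), sub_add_cancel, rpow_one]

lemma monotoneOn_rpow_mul_log_pow {s : ℝ} (hs : 0 ≤ s) (m : ℕ) :
    MonotoneOn (fun u : ℝ => u ^ s * log u ^ m) (Set.Ici 1) := by
  intro a (ha : 1 ≤ a) b _ hab
  exact mul_le_mul (rpow_le_rpow (by linarith) hab hs)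
    (pow_le_pow_left₀ (log_nonneg ha) (log_le_log (by linarith) hab) m)
    (pow_nonneg (log_nonneg ha) m) (rpow_nonneg (by linarith) s)

lemma antitoneOn_div_rpow_mul_log_div_pow {x s : ℝ} (hx : 0 ≤ x) (hs : 0 ≤ s) (m : ℕ) :
    AntitoneOn (fun d : ℕ => (x / d) ^ s * log (x / d) ^ m) (Set.Icc 1 ⌊x⌋₊) := by
  intro a ha b hb hab
  have ha0 : (0 : ℝ) < a := by exact_mod_cast ha.1
  have hxb := one_le_div_of_mem_Icc_floor hb
  have hba : x / b ≤ x / a := div_le_div_of_nonneg_left hx ha0 (by exact_mod_cast hab)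
  exact monotoneOn_rpow_mul_log_pow hs m hxb (hxb.trans hba) hba

lemma sum_Icc_floor_div_rpow_mul_log_div_pow_le {p x : ℝ} (hp0 : 0 < p) (hp1 : p ≤ 1)
    (hx : 1 ≤ x) (m : ℕ) :
    ∑ d ∈ Icc 1 ⌊x⌋₊, (x / d) ^ (1 - p) * log (x / d) ^ m ≤ log x ^ m * (x / p) := by
  calc ∑ d ∈ Icc 1 ⌊x⌋₊, (x / d) ^ (1 - p) * log (x / d) ^ m
      ≤ ∑ d ∈ Icc 1 ⌊x⌋₊, (x / d) ^ (1 - p) * log x ^ m := by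
        refine sum_le_sum fun d hd => ?_
        have hd1 := one_le_div_of_mem_Icc_floor (mem_Icc.1 hd)
        have hdx : x / d ≤ x := div_le_self (by linarith) (by exact_mod_cast (mem_Icc.1 hd).1)
        gcongr
        exact log_nonneg hd1
    _ = log x ^ m * ∑ d ∈ Icc 1 ⌊x⌋₊, (x / d) ^ (1 - p) := by
        rw [mul_sum]; exact sum_congr rfl fun _ _ => mul_comm _ _
    _ ≤ log x ^ m * (x / p) := by
        gcongr
        · exact pow_nonneg (log_nonneg hx) m
        · exact sum_Icc_floor_div_rpow_le hp0 hp1 (by linarith)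

-- Summation by parts against a decreasing weight.
lemma partialSum_mul_le_sum_mul {c w : ℕ → ℝ} {N : ℕ} (hw : AntitoneOn w (Set.Icc 1 N))
    (hc : ∀ k ≤ N, 0 ≤ ∑ n ∈ Icc 1 k, c n) :
    (∑ n ∈ Icc 1 N, c n) * w N ≤ ∑ n ∈ Icc 1 N, c n * w n := by
  induction N with
  | zero => simp
  | succ N ih =>
    have ih' := ih (hw.mono (Set.Icc_subset_Icc_right N.le_succ)) fun k hk => hc k (by omega)
    have hwN : (∑ n ∈ Icc 1 N, c n) * w (N + 1) ≤ (∑ n ∈ Icc 1 N, c n) * w N := by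
      rcases N.eq_zero_or_pos with rfl | hN
      · simp
      · exact mul_le_mul_of_nonneg_left (hw ⟨hN, by omega⟩ ⟨by omega, le_rfl⟩ (by omega))
          (hc N (by omega))
    rw [sum_Icc_succ_top (by omega), sum_Icc_succ_top (by omega), add_mul]
    linarith

lemma sum_mul_le_sum_mul_of_partialSum_le {a b w : ℕ → ℝ} {N : ℕ}
    (hw : AntitoneOn w (Set.Icc 1 N)) (hw0 : 0 ≤ w N)
    (hab : ∀ k ≤ N, ∑ n ∈ Icc 1 k, a n ≤ ∑ n ∈ Icc 1 k, b n) :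
    ∑ n ∈ Icc 1 N, a n * w n ≤ ∑ n ∈ Icc 1 N, b n * w n := by
  have hc : ∀ k ≤ N, 0 ≤ ∑ n ∈ Icc 1 k, (b n - a n) := fun k hk => by
    rw [sum_sub_distrib]; exact sub_nonneg.2 (hab k hk)
  have h := (mul_nonneg (hc N le_rfl) hw0).trans (partialSum_mul_le_sum_mul hw hc)
  simp only [sub_mul, sum_sub_distrib] at h
  linarith

lemma nonneg_of_partialSum_le {f : ℕ → ℝ} (hf : ∀ n, 0 ≤ f n) {K β : ℝ}
    (hK : ∀ t : ℝ, 3 ≤ t → ∑ n ∈ Icc 1 ⌊t⌋₊, f n ≤ K * t * log (log t) ^ β) : 0 ≤ K := by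
  have hpos : 0 < 3 * log (log 3) ^ β := by
    have := log_pos (one_lt_log_of_three_le le_rfl); positivity
  have h := (sum_nonneg fun n _ => hf n).trans (hK 3 le_rfl)
  exact nonneg_of_mul_nonneg_left (by rwa [mul_assoc] at h) hpos

lemma partialSum_le_mul_of_le {f : ℕ → ℝ} (hf : ∀ n, 0 ≤ f n) {K β : ℝ} (hβ : 0 ≤ β)
    (hK : ∀ t : ℝ, 3 ≤ t → ∑ n ∈ Icc 1 ⌊t⌋₊, f n ≤ K * t * log (log t) ^ β)
    {x : ℝ} (hx : 3 ≤ x) {k : ℕ} (hkx : (k : ℝ) ≤ x) :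
    ∑ n ∈ Icc 1 k, f n ≤ k * (3 * K * log (log x) ^ β) := by
  rcases k.eq_zero_or_pos with rfl | hk
  · simp
  have hk1 : (1 : ℝ) ≤ k := by exact_mod_cast hk
  set t : ℝ := max (k : ℝ) 3
  have ht3 : 3 ≤ t := le_max_right _ _
  have hlogt := one_lt_log_of_three_le ht3
  have hL : log (log t) ^ β ≤ log (log x) ^ β := by
    gcongr
    · exact (log_pos hlogt).le
    · exact max_le hkx hx
  have hK0 := nonneg_of_partialSum_le hf hK
  have hLt : 0 ≤ log (log t) ^ β := rpow_nonneg (log_pos hlogt).le _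
  calc ∑ n ∈ Icc 1 k, f n ≤ ∑ n ∈ Icc 1 ⌊t⌋₊, f n :=
        sum_le_sum_of_subset_of_nonneg (Icc_subset_Icc_right (Nat.le_floor (le_max_left _ _)))
          fun n _ _ => hf n
    _ ≤ K * t * log (log t) ^ β := hK t ht3
    _ ≤ K * (3 * k) * log (log x) ^ β := by
        gcongr
        exact max_le (by linarith) (by linarith)
    _ = k * (3 * K * log (log x) ^ β) := by ring


lemma sum_mul_div_rpow_mul_log_div_pow_le {f : ℕ → ℝ} {x s A : ℝ} (hx : 1 ≤ x) (hs : 0 ≤ s)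
    (m : ℕ) (hf : ∀ k ≤ ⌊x⌋₊, ∑ n ∈ Icc 1 k, f n ≤ k * A) :
    ∑ d ∈ Icc 1 ⌊x⌋₊, f d * ((x / d) ^ s * log (x / d) ^ m) ≤
      A * ∑ d ∈ Icc 1 ⌊x⌋₊, (x / d) ^ s * log (x / d) ^ m := by
  have hN := one_le_div_of_mem_Icc_floor (x := x) ⟨Nat.le_floor (by simpa using hx), le_rfl⟩
  rw [mul_sum]
  refine sum_mul_le_sum_mul_of_partialSum_le (b := fun _ => A)
    (antitoneOn_div_rpow_mul_log_div_pow (by linarith) hs m)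
    (mul_nonneg (rpow_nonneg (by linarith) _) (pow_nonneg (log_nonneg hN) _)) fun k hk => ?_
  rw [sum_const, Nat.card_Icc, add_tsub_cancel_right, nsmul_eq_mul]
  exact hf k hk

/-- If `f ≥ 0` and `∑_{n ≤ t} f(n) ≪ t (log log t)^β` for `t ≥ 3`, and `r ≥ 2`,
then `∑_{d ≤ x} f(d)·(x/d)^(1−1/r)·(log(x/d))^(r−2) ≪ x (log x)^(r−2) (log log x)^β`. -/
theorem weighted_sum_bound (f : ℕ → ℝ) (hfpos : ∀ n, 0 ≤ f n) (β : ℝ) (hβ : 0 ≤ β)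
    (r : ℕ) (hr : 2 ≤ r)
    (hsum : ∃ K : ℝ, ∀ t : ℝ, 3 ≤ t →
      (∑ n ∈ Finset.Icc 1 ⌊t⌋₊, f n) ≤ K * t * (Real.log (Real.log t)) ^ β) :
    ∃ C : ℝ, ∀ x : ℝ, 3 ≤ x →
      (∑ d ∈ Finset.Icc 1 ⌊x⌋₊,
        f d * (x / d) ^ (1 - 1 / (r : ℝ)) * (Real.log (x / d)) ^ (r - 2)) ≤
      C * x * (Real.log x) ^ (r - 2) * (Real.log (Real.log x)) ^ β := by
  obtain ⟨K, hK⟩ := hsum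
  have hr0 : (0 : ℝ) < r := by positivity
  have hr1 : 1 / (r : ℝ) ≤ 1 := by rw [div_le_one hr0]; exact_mod_cast (by omega : 1 ≤ r)
  refine ⟨3 * K * r, fun x hx => ?_⟩
  have hA : 0 ≤ 3 * K * log (log x) ^ β := by
    have := nonneg_of_partialSum_le hfpos hK
    have := log_pos (one_lt_log_of_three_le hx)
    positivity
  calc ∑ d ∈ Icc 1 ⌊x⌋₊, f d * (x / d) ^ (1 - 1 / (r : ℝ)) * log (x / d) ^ (r - 2)
      = ∑ d ∈ Icc 1 ⌊x⌋₊, f d * ((x / d) ^ (1 - 1 / (r : ℝ)) * log (x / d) ^ (r - 2)) := by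
        simp only [mul_assoc]
    _ ≤ 3 * K * log (log x) ^ β *
          ∑ d ∈ Icc 1 ⌊x⌋₊, (x / d) ^ (1 - 1 / (r : ℝ)) * log (x / d) ^ (r - 2) :=
        sum_mul_div_rpow_mul_log_div_pow_le (by linarith) (by linarith) _ fun k hk =>
          partialSum_le_mul_of_le hfpos hβ hK hx
            ((Nat.cast_le.2 hk).trans (Nat.floor_le (by linarith)))
    _ ≤ 3 * K * log (log x) ^ β * (log x ^ (r - 2) * (x / (1 / r))) := by
        gcongr
        exact sum_Icc_floor_div_rpow_mul_log_div_pow_le (by positivity) hr1 (by linarith) _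
    _ = 3 * K * r * x * log x ^ (r - 2) * log (log x) ^ β := by field_simp
end

section
/- Let g be an arithmetic function with g(0) = 0, g(1) ≠ 0, and g(n) = O(2^{n/2}), and define f(n) = ∑_{p^a ∥ n} g(a). Then ∑_{n ≤ x} f(n) ≪ x log log x for x ≥ 3. -/
/-!
Since `|g a| ≤ K √2 ^ a`, it suffices to bound `∑_{n ≤ N} ∑_{p ∣ n} √2 ^ v_p(n)`. Bounding
`√2 ^ v_p(n)` by `∑_{1 ≤ a, p ^ a ∣ n} √2 ^ a` and using that at most `N / p ^ a` integers
`n ≤ N` are divisible by `p ^ a`, the sum is at most `N ∑_{p ≤ N} ∑_{a ≥ 1} (√2 / p) ^ a`, and the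
geometric series converges because `p ≥ 2 > √2`; this gives `≤ 6 N ∑_{p ≤ N} 1 / p`.
The primes in a dyadic block `[2 ^ j, 2 ^ (j + 1))` multiply to at most the primorial
`≤ 4 ^ 2 ^ (j + 1)`, so there are at most `2 ^ (j + 2) / j` of them, and summing over the blocks
gives `∑_{p ≤ N} 1 / p ≤ 4 H_{log₂ N} ≪ log log N`.
-/

open Finset Real

theorem card_filter_dvd_Icc_le (N m : ℕ) : (#{n ∈ Icc 1 N | m ∣ n} : ℝ) ≤ N / m := by
  rw [show Icc 1 N = Ioc 0 N from rfl, Nat.Ioc_filter_dvd_card_eq_div]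
  exact Nat.cast_div_le

theorem le_sum_Icc_ite_pow_dvd {w : ℕ → ℝ} (hw : ∀ a, 0 ≤ w a) {n N p : ℕ} (hnN : n ≤ N)
    (hp : p ∈ n.primeFactors) :
    w (n.factorization p) ≤ ∑ a ∈ Icc 1 N, if p ^ a ∣ n then w a else 0 := by
  obtain ⟨hpp, hpn, hn⟩ := Nat.mem_primeFactors.1 hp
  have hmem : n.factorization p ∈ Icc 1 N :=
    mem_Icc.2 ⟨hpp.factorization_pos_of_dvd hn hpn, (Nat.factorization_lt p hn).le.trans hnN⟩
  calc w (n.factorization p) = if p ^ n.factorization p ∣ n then w (n.factorization p) else 0 :=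
        (if_pos (Nat.ordProj_dvd n p)).symm
    _ ≤ _ := single_le_sum (f := fun a => if p ^ a ∣ n then w a else 0)
        (fun a _ => by split_ifs <;> simp [hw]) hmem

theorem sum_Icc_sum_primeFactors_le {w : ℕ → ℝ} (hw : ∀ a, 0 ≤ w a) (N : ℕ) :
    ∑ n ∈ Icc 1 N, ∑ p ∈ n.primeFactors, w (n.factorization p) ≤
      N * ∑ p ∈ Nat.primesLE N, ∑ a ∈ Icc 1 N, w a / (p : ℝ) ^ a := by
  have hdvd : ∀ n ∈ Icc 1 N, ∑ p ∈ n.primeFactors, w (n.factorization p) ≤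
      ∑ p ∈ Nat.primesLE N, ∑ a ∈ Icc 1 N, if p ^ a ∣ n then w a else 0 := by
    intro n hn
    have hnN := (mem_Icc.1 hn).2
    calc _ ≤ ∑ p ∈ n.primeFactors, ∑ a ∈ Icc 1 N, if p ^ a ∣ n then w a else 0 :=
          sum_le_sum fun p hp => le_sum_Icc_ite_pow_dvd hw hnN hp
      _ ≤ _ := by
        refine sum_le_sum_of_subset_of_nonneg (fun p hp => ?_) fun p _ _ => ?_
        · exact Nat.mem_primesLE.2 ⟨(Nat.le_of_mem_primeFactors hp).trans hnN,
            Nat.prime_of_mem_primeFactors hp⟩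
        · exact sum_nonneg fun a _ => by split_ifs <;> simp [hw]
  calc _ ≤ ∑ n ∈ Icc 1 N, ∑ p ∈ Nat.primesLE N, ∑ a ∈ Icc 1 N, if p ^ a ∣ n then w a else 0 :=
        sum_le_sum hdvd
    _ = ∑ p ∈ Nat.primesLE N, ∑ a ∈ Icc 1 N, (#{n ∈ Icc 1 N | p ^ a ∣ n} : ℝ) * w a := by
        rw [sum_comm]
        refine sum_congr rfl fun p _ => ?_
        rw [sum_comm]
        refine sum_congr rfl fun a _ => ?_
        rw [← sum_filter, sum_const, nsmul_eq_mul]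
    _ ≤ ∑ p ∈ Nat.primesLE N, ∑ a ∈ Icc 1 N, (N / (p ^ a : ℕ) : ℝ) * w a := by
        gcongr with p _ a _
        · exact hw a
        · exact card_filter_dvd_Icc_le N (p ^ a)
    _ = _ := by
        simp only [mul_sum]
        refine sum_congr rfl fun p _ => sum_congr rfl fun a _ => ?_
        push_cast
        ring

theorem sum_Icc_sqrt_two_pow_div_pow_le {p : ℝ} (hp : 2 ≤ p) (N : ℕ) :
    ∑ a ∈ Icc 1 N, √2 ^ a / p ^ a ≤ 6 / p := by
  have hs := sqrt_two_lt_three_halves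
  have hr0 : 0 ≤ √2 / p := by positivity
  have hr1 : √2 / p < 1 := (div_lt_one (by linarith)).2 (by linarith)
  calc ∑ a ∈ Icc 1 N, √2 ^ a / p ^ a = ∑ a ∈ Ico 1 (N + 1), (√2 / p) ^ a := by
        simp only [div_pow]; rfl
    _ ≤ (√2 / p) ^ 1 / (1 - √2 / p) := geom_sum_Ico_le_of_lt_one hr0 hr1
    _ = √2 / (p - √2) := by field_simp
    _ ≤ 6 / p := by
        rw [div_le_div_iff₀ (by linarith) (by linarith)]
        nlinarith

theorem mul_card_le_of_primes_mem_Ico {j : ℕ} {F : Finset ℕ}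
    (hF : ∀ p ∈ F, p.Prime ∧ p ∈ Ico (2 ^ j) (2 ^ (j + 1))) : j * #F ≤ 2 ^ (j + 2) := by
  have hprod : ∏ p ∈ F, p ≤ primorial (2 ^ (j + 1)) := by
    refine prod_le_prod_of_subset_of_one_le' (fun p hp => ?_) fun p hp _ =>
      (mem_filter.1 hp).2.one_lt.le
    obtain ⟨hpp, hpI⟩ := hF p hp
    exact mem_filter.2 ⟨mem_range.2 (by grind), hpp⟩
  refine (Nat.pow_le_pow_iff_right one_lt_two).1 ?_
  calc 2 ^ (j * #F) = (2 ^ j) ^ #F := pow_mul 2 j #F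
    _ ≤ ∏ p ∈ F, p := pow_card_le_prod _ _ _ fun p hp => (mem_Ico.1 (hF p hp).2).1
    _ ≤ 4 ^ 2 ^ (j + 1) := hprod.trans (primorial_le_four_pow _)
    _ = 2 ^ 2 ^ (j + 2) := by rw [show 4 = 2 ^ 2 from rfl, ← pow_mul, pow_succ 2 (j + 1), mul_comm]

theorem sum_inv_le_of_primes_mem_Ico {j : ℕ} (hj : 0 < j) {F : Finset ℕ}
    (hF : ∀ p ∈ F, p.Prime ∧ p ∈ Ico (2 ^ j) (2 ^ (j + 1))) :
    ∑ p ∈ F, (p : ℝ)⁻¹ ≤ 4 / j := by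
  have hcard : (#F : ℝ) ≤ 2 ^ (j + 2) / j := by
    rw [le_div_iff₀ (by exact_mod_cast hj), mul_comm]
    exact_mod_cast mul_card_le_of_primes_mem_Ico hF
  calc ∑ p ∈ F, (p : ℝ)⁻¹ ≤ #F • ((2 : ℝ) ^ j)⁻¹ := by
        refine sum_le_card_nsmul F _ _ fun p hp => inv_anti₀ (by positivity) ?_
        exact_mod_cast (mem_Ico.1 (hF p hp).2).1
    _ ≤ 2 ^ (j + 2) / j * ((2 : ℝ) ^ j)⁻¹ := by rw [nsmul_eq_mul]; gcongr
    _ = 4 / j := by rw [pow_add]; field_simp; norm_num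

theorem sum_inv_primesLE_le (n : ℕ) :
    ∑ p ∈ Nat.primesLE n, (p : ℝ)⁻¹ ≤ 4 * (1 + log (Nat.log 2 n)) := by
  have hlog : ∀ p ∈ Nat.primesLE n, Nat.log 2 p ∈ Icc 1 (Nat.log 2 n) := by
    intro p hp
    obtain ⟨hpn, hpp⟩ := Nat.mem_primesLE.1 hp
    exact mem_Icc.2 ⟨Nat.log_pos one_lt_two hpp.two_le, Nat.log_mono_right hpn⟩
  have hblock : ∀ j ∈ Icc 1 (Nat.log 2 n),
      ∑ p ∈ Nat.primesLE n with Nat.log 2 p = j, (p : ℝ)⁻¹ ≤ 4 / j := by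
    intro j hj
    refine sum_inv_le_of_primes_mem_Ico (mem_Icc.1 hj).1 fun p hp => ?_
    obtain ⟨hpn, rfl⟩ := mem_filter.1 hp
    have hpp := (Nat.mem_primesLE.1 hpn).2
    exact ⟨hpp, mem_Ico.2
      ⟨Nat.pow_log_le_self 2 hpp.ne_zero, Nat.lt_pow_succ_log_self one_lt_two p⟩⟩
  calc ∑ p ∈ Nat.primesLE n, (p : ℝ)⁻¹
      = ∑ j ∈ Icc 1 (Nat.log 2 n), ∑ p ∈ Nat.primesLE n with Nat.log 2 p = j, (p : ℝ)⁻¹ :=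
        (sum_fiberwise_of_maps_to hlog _).symm
    _ ≤ ∑ j ∈ Icc 1 (Nat.log 2 n), 4 / (j : ℝ) := sum_le_sum hblock
    _ = 4 * harmonic (Nat.log 2 n) := by
        simp [harmonic_eq_sum_Icc, mul_sum, div_eq_mul_inv]
    _ ≤ 4 * (1 + log (Nat.log 2 n)) := by gcongr; exact harmonic_le_one_add_log _

theorem natLog_two_floor_le {x : ℝ} (hx : 1 ≤ x) : (Nat.log 2 ⌊x⌋₊ : ℝ) ≤ 2 * log x := by
  have hfloor : (0 : ℝ) < ⌊x⌋₊ := by exact_mod_cast Nat.floor_pos.2 hx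
  have hlogx : 0 ≤ log x := log_nonneg hx
  calc (Nat.log 2 ⌊x⌋₊ : ℝ) ≤ logb 2 ⌊x⌋₊ := by exact_mod_cast natLog_le_logb ⌊x⌋₊ 2
    _ ≤ log x / log 2 := div_le_div_of_nonneg_right
        (log_le_log hfloor (Nat.floor_le (by linarith))) (log_nonneg one_le_two)
    _ ≤ 2 * log x := by
        rw [div_le_iff₀ (log_pos one_lt_two)]
        nlinarith [log_two_gt_d9]

theorem one_add_log_natLog_two_floor_le {x : ℝ} (hx : 3 ≤ x) :
    1 + log (Nat.log 2 ⌊x⌋₊) ≤ (1 + (1 + log 2) / log (log 3)) * log (log x) := by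
  have hlog3 : 1 < log 3 := by
    rw [lt_log_iff_exp_lt (by norm_num)]
    linarith [exp_one_lt_d9]
  have hloglog3 : 0 < log (log 3) := log_pos hlog3
  have hlogx : 1 < log x := hlog3.trans_le (log_le_log (by norm_num) hx)
  have hmono : log (log 3) ≤ log (log x) := log_le_log (by linarith) (log_le_log (by norm_num) hx)
  have hL : log (Nat.log 2 ⌊x⌋₊) ≤ log 2 + log (log x) := by
    rcases (Nat.log 2 ⌊x⌋₊).eq_zero_or_pos with h | h
    · rw [h, Nat.cast_zero, log_zero]
      linarith [log_pos one_lt_two, log_pos hlogx]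
    · rw [← log_mul two_ne_zero (by linarith)]
      exact log_le_log (by exact_mod_cast h) (natLog_two_floor_le (by linarith))
  have hratio : 1 + log 2 ≤ (1 + log 2) / log (log 3) * log (log x) := by
    rw [div_mul_eq_mul_div, le_div_iff₀ hloglog3]
    gcongr
  linarith

theorem duncan_sum_bound_general (g : ℕ → ℝ)
    (hg : ∃ K : ℝ, ∀ n : ℕ, |g n| ≤ K * (2 : ℝ) ^ ((n : ℝ) / 2)) :
    ∃ C : ℝ, ∀ x : ℝ, 3 ≤ x →
      |∑ n ∈ Finset.Icc 1 ⌊x⌋₊,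
        ∑ p ∈ n.primeFactors, g (n.factorization p)| ≤
      C * x * Real.log (Real.log x) := by
  obtain ⟨K, hK⟩ := hg
  have hK0 : 0 ≤ K := by simpa using (abs_nonneg _).trans (hK 0)
  have hgK : ∀ a, |g a| ≤ K * √2 ^ a := fun a => by
    simpa [rpow_div_two_eq_sqrt _ zero_le_two] using hK a
  refine ⟨24 * K * (1 + (1 + log 2) / log (log 3)), fun x hx => ?_⟩
  set N := ⌊x⌋₊
  have hNx : (N : ℝ) ≤ x := Nat.floor_le (by linarith)
  calc |∑ n ∈ Icc 1 N, ∑ p ∈ n.primeFactors, g (n.factorization p)|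
      ≤ ∑ n ∈ Icc 1 N, ∑ p ∈ n.primeFactors, K * √2 ^ n.factorization p :=
        (abs_sum_le_sum_abs _ _).trans <| sum_le_sum fun n _ =>
          (abs_sum_le_sum_abs _ _).trans <| sum_le_sum fun p _ => hgK _
    _ ≤ N * ∑ p ∈ Nat.primesLE N, ∑ a ∈ Icc 1 N, K * √2 ^ a / (p : ℝ) ^ a :=
        sum_Icc_sum_primeFactors_le (w := fun a => K * √2 ^ a) (fun a => by positivity) N
    _ ≤ N * ∑ p ∈ Nat.primesLE N, K * (6 / p) := by
        gcongr with p hp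
        simp only [mul_div_assoc, ← mul_sum]
        gcongr
        exact sum_Icc_sqrt_two_pow_div_pow_le
          (by exact_mod_cast (Nat.mem_primesLE.1 hp).2.two_le) N
    _ = 6 * K * N * ∑ p ∈ Nat.primesLE N, (p : ℝ)⁻¹ := by
        rw [mul_sum, mul_sum]
        exact sum_congr rfl fun p _ => by ring
    _ ≤ 6 * K * x * (4 * (1 + (1 + log 2) / log (log 3)) * log (log x)) := by
        gcongr
        exact (sum_inv_primesLE_le N).trans
          (by linarith [one_add_log_natLog_two_floor_le hx])
    _ = _ := by ring

/-- Duncan's theorem: if `g(0)=0`, `g(1)≠0`, `g(n)=O(2^(n/2))` and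
`f(n) = ∑_{p^a ∥ n} g(a)`, then `∑_{n ≤ x} f(n) ≪ x log log x`. -/
theorem duncan_sum_bound (g : ℕ → ℝ) (hg0 : g 0 = 0) (hg1 : g 1 ≠ 0)
    (hg : ∃ K : ℝ, ∀ n : ℕ, |g n| ≤ K * (2 : ℝ) ^ ((n : ℝ) / 2)) :
    ∃ C : ℝ, ∀ x : ℝ, 3 ≤ x →
      |∑ n ∈ Finset.Icc 1 ⌊x⌋₊,
        ∑ p ∈ n.primeFactors, g (n.factorization p)| ≤
      C * x * Real.log (Real.log x) :=
  duncan_sum_bound_general g hg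
end
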